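/- Let p be a clearing vector of a financial system, P the set of cash-accessible nodes, and A the set of nodes in Pᶜ from which P is accessible. Then p(j) = 0 for all j ∈ A. -/
import Mathlib


def Markov {n : ℕ} (M : Matrix (Fin n) (Fin n) ℝ) : Prop :=
  (∀ i j, 0 ≤ M i j) ∧ ∀ i, ∑ j, M i j = 1

noncomputable def Phi {n : ℕ} (M : Matrix (Fin n) (Fin n) ℝ)
    (e pbar p : Fin n → ℝ) : Fin n → ℝ :=
  fun j => min (Matrix.vecMul p M j + e j) (pbar j)

/-- `j` is accessible from `i` under `M`: either `j = i` or some power of `M`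
has positive `(i, j)` entry. -/
def Access {n : ℕ} (M : Matrix (Fin n) (Fin n) ℝ) (i j : Fin n) : Prop :=
  j = i ∨ ∃ k : ℕ, 0 < k ∧ 0 < (M ^ k) i j

/-- `j` is cash accessible: accessible from some node with positive cash. -/
def CashAcc {n : ℕ} (M : Matrix (Fin n) (Fin n) ℝ) (e : Fin n → ℝ)
    (j : Fin n) : Prop :=
  ∃ i, 0 < e i ∧ Access M i j

private lemma pow_entry_nonneg {n : ℕ} {M : Matrix (Fin n) (Fin n) ℝ}
    (hM : ∀ i j, 0 ≤ M i j) : ∀ (k : ℕ) (i j : Fin n), 0 ≤ (M ^ k) i j := by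
  intro k
  induction k with
  | zero =>
    intro i j
    rw [pow_zero]
    simp only [Matrix.one_apply]
    split <;> norm_num
  | succ k ih =>
    intro i j
    rw [pow_succ, Matrix.mul_apply]
    exact Finset.sum_nonneg fun t _ => mul_nonneg (ih i t) (hM t j)

private lemma access_trans {n : ℕ} {M : Matrix (Fin n) (Fin n) ℝ}
    (hM : ∀ i j, 0 ≤ M i j) {a b c : Fin n}
    (h1 : Access M a b) (h2 : Access M b c) : Access M a c := by
  rcases h1 with rfl | ⟨k, hk, hke⟩
  · exact h2
  · rcases h2 with rfl | ⟨m, hm, hme⟩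
    · exact Or.inr ⟨k, hk, hke⟩
    · refine Or.inr ⟨k + m, by omega, ?_⟩
      rw [pow_add, Matrix.mul_apply]
      have h := mul_pos hke hme
      exact lt_of_lt_of_le h <|
        Finset.single_le_sum
          (fun t _ => mul_nonneg (pow_entry_nonneg hM k a t) (pow_entry_nonneg hM m t c))
          (Finset.mem_univ b)

/-- a clearing vector vanishes on the set A of nodes that are
not cash accessible but from which the cash-accessible set is accessible. -/
theorem clearing_vector_zero_on_A {n : ℕ} (M : Matrix (Fin n) (Fin n) ℝ)
    (pbar e : Fin n → ℝ) (hM : Markov M) (hpbar : ∀ i, 0 < pbar i)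
    (he : 0 ≤ e) (p : Fin n → ℝ) (hp0 : 0 ≤ p) (hpbd : p ≤ pbar)
    (hfix : Phi M e pbar p = p) :
    ∀ j : Fin n, ¬ CashAcc M e j →
      (∃ i, CashAcc M e i ∧ Access M j i) → p j = 0 := by
  classical
  obtain ⟨hMnn, hMrow⟩ := hM
  set S : Finset (Fin n) := Finset.univ.filter (fun i => ¬ CashAcc M e i) with hS
  have hSmem : ∀ i, i ∈ S ↔ ¬ CashAcc M e i := by
    intro i; simp [hS]
  -- no edge from a cash-accessible node into a non cash-accessible node
  have hMzero : ∀ i j : Fin n, CashAcc M e i → ¬ CashAcc M e j → M i j = 0 := by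
    intro i j hi hj
    by_contra hne
    have hpos : 0 < M i j := lt_of_le_of_ne (hMnn i j) (Ne.symm hne)
    obtain ⟨s, hs, hacc⟩ := hi
    exact hj ⟨s, hs, access_trans hMnn hacc (Or.inr ⟨1, one_pos, by simpa using hpos⟩)⟩
  have he0 : ∀ j : Fin n, ¬ CashAcc M e j → e j = 0 := by
    intro j hj
    by_contra hne
    exact hj ⟨j, lt_of_le_of_ne (he j) (Ne.symm hne), Or.inl rfl⟩
  -- for j in S : p j ≤ inflow from S
  have hple : ∀ j ∈ S, p j ≤ ∑ i ∈ S, p i * M i j := by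
    intro j hj
    have hjn : ¬ CashAcc M e j := (hSmem j).1 hj
    have h1 : p j ≤ Matrix.vecMul p M j + e j := by
      conv_lhs => rw [← hfix]
      exact min_le_left _ _
    have h2 : Matrix.vecMul p M j = ∑ i, p i * M i j := by
      simp [Matrix.vecMul, dotProduct]
    have h3 : ∑ i, p i * M i j = ∑ i ∈ S, p i * M i j := by
      refine (Finset.sum_subset (Finset.subset_univ S) ?_).symm
      intro i _ hiS
      have hi : CashAcc M e i := by
        by_contra h; exact hiS ((hSmem i).2 h)
      rw [hMzero i j hi hjn, mul_zero]
    calc p j ≤ Matrix.vecMul p M j + e j := h1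
      _ = ∑ i ∈ S, p i * M i j := by rw [h2, h3, he0 j hjn, add_zero]
  have hswap : ∑ j ∈ S, ∑ i ∈ S, p i * M i j = ∑ i ∈ S, p i * ∑ j ∈ S, M i j := by
    rw [Finset.sum_comm]
    simp_rw [Finset.mul_sum]
  have hc : ∀ i ∈ S, ∑ j ∈ S, M i j ≤ 1 := by
    intro i _
    rw [← hMrow i]
    exact Finset.sum_le_sum_of_subset_of_nonneg (Finset.subset_univ S)
      (fun j _ _ => hMnn i j)
  have hsum2 : ∑ i ∈ S, p i * ∑ j ∈ S, M i j ≤ ∑ i ∈ S, p i :=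
    Finset.sum_le_sum fun i hi => mul_le_of_le_one_right (hp0 i) (hc i hi)
  have heq : ∑ j ∈ S, p j = ∑ j ∈ S, ∑ i ∈ S, p i * M i j :=
    le_antisymm (Finset.sum_le_sum hple) (by rw [hswap]; exact hsum2)
  have htermJ : ∀ j ∈ S, p j = ∑ i ∈ S, p i * M i j :=
    fun j hj => ((Finset.sum_eq_sum_iff_of_le hple).1 heq j hj)
  have heq2 : ∑ i ∈ S, p i * ∑ j ∈ S, M i j = ∑ i ∈ S, p i := by
    rw [← hswap, ← heq]
  have htermI : ∀ i ∈ S, p i = p i * ∑ j ∈ S, M i j :=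
    fun i hi => ((Finset.sum_eq_sum_iff_of_le
      (fun i hi => mul_le_of_le_one_right (hp0 i) (hc i hi))).1 heq2 i hi).symm
  -- no escape from S at nodes with positive payment
  have hnoesc : ∀ i ∈ S, 0 < p i → ∀ l, l ∉ S → M i l = 0 := by
    intro i hi hpi l hl
    have hc1 : ∑ j ∈ S, M i j = 1 := by
      have := htermI i hi
      have h' : p i * ∑ j ∈ S, M i j = p i * 1 := by rw [mul_one, ← this]
      exact mul_left_cancel₀ (ne_of_gt hpi) h'
    have hcompl : ∑ j ∈ Sᶜ, M i j = 0 := by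
      have := Finset.sum_add_sum_compl S (fun j => M i j)
      rw [hc1, hMrow i] at this
      linarith
    have := (Finset.sum_eq_zero_iff_of_nonneg
      (fun j _ => hMnn i j)).1 hcompl l (Finset.mem_compl.2 hl)
    exact this
  -- positivity propagates forward along paths, staying in S
  have hpos : ∀ (k : ℕ) (j : Fin n), j ∈ S → 0 < p j →
      ∀ l, 0 < (M ^ k) j l → l ∈ S ∧ 0 < p l := by
    intro k
    induction k with
    | zero =>
      intro j hj hpj l hl
      rw [pow_zero] at hl
      simp only [Matrix.one_apply] at hl
      by_cases h : j = l
      · subst h; exact ⟨hj, hpj⟩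
      · simp [h] at hl
    | succ k ih =>
      intro j hj hpj l hl
      rw [pow_succ, Matrix.mul_apply] at hl
      have hex : ∃ m, 0 < (M ^ k) j m * M m l := by
        by_contra hcon
        push_neg at hcon
        have : ∑ m, (M ^ k) j m * M m l ≤ 0 :=
          Finset.sum_nonpos fun m _ => hcon m
        linarith
      obtain ⟨m, hm⟩ := hex
      have hfac : 0 < (M ^ k) j m ∧ 0 < M m l := by
        rcases mul_pos_iff.mp hm with h | ⟨h1, h2⟩
        · exact h
        · exact absurd h2 (not_lt.2 (hMnn m l))
      obtain ⟨hmS, hpm⟩ := ih j hj hpj m hfac.1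
      have hlS : l ∈ S := by
        by_contra hl'
        rw [hnoesc m hmS hpm l hl'] at hfac
        exact lt_irrefl 0 hfac.2
      refine ⟨hlS, ?_⟩
      rw [htermJ l hlS]
      exact lt_of_lt_of_le (mul_pos hpm hfac.2)
        (Finset.single_le_sum (fun i _ => mul_nonneg (hp0 i) (hMnn i l)) hmS)
  intro j hj hex
  obtain ⟨i, hi, hacc⟩ := hex
  by_contra hne
  have hpj : 0 < p j := lt_of_le_of_ne (hp0 j) (Ne.symm hne)
  rcases hacc with rfl | ⟨k, hk, hke⟩
  · exact hj hi
  · have := hpos k j ((hSmem j).2 hj) hpj i hke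
    exact ((hSmem i).1 this.1) hi
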